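/- For s ≥ 1, consider the f-SAND instance on the Odd graph O_s augmented by a root: O_s has one vertex for each s-element subset of {1,…,2s+1}, two vertices adjacent if and only if the corresponding subsets are disjoint, so n = C(2s+1, s) vertices each of degree s+1; add a root r adjacent to every vertex of O_s; each edge incident to r has cost 2 and each edge of O_s has cost 1; for every edge (u,v) of O_s there is a color C_{uv} = ({u} ∪ N(u)) ∖ {v}, where N(u) is the neighborhood of u in O_s. Then every feasible capacity installation for this instance has cost at least n + 1. -/

import Mathlib

open scoped Classical
open Finset

namespace FSand

variable {V : Type} [Fintype V] [DecidableEq V]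

/-- An edge crosses the cut `(S, Sᶜ)`. -/
def Crossing (S : Finset V) (e : Sym2 V) : Prop :=
  ∃ u v, e = s(u, v) ∧ u ∈ S ∧ v ∉ S

/-- Total capacity installed on edges crossing the cut `(S, Sᶜ)`. -/
noncomputable def cutCap (x : Sym2 V → ℕ) (S : Finset V) : ℕ :=
  ∑ e ∈ Finset.univ.filter (Crossing S), x e

/-- Feasibility of a capacity installation for the f-SAND instance `(G, r, C)`. -/
def Feasible {ι : Type} (G : SimpleGraph V) (r : V) (C : ι → Finset V)
    (x : Sym2 V → ℕ) : Prop :=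
  (∀ e, e ∉ G.edgeSet → x e = 0) ∧
  ∀ S : Finset V, r ∉ S → ∀ i : ι, (C i ∩ S).card ≤ cutCap x S

/-- Cost of a capacity installation. -/
noncomputable def instCost (w : Sym2 V → ℝ) (x : Sym2 V → ℕ) : ℝ :=
  ∑ e : Sym2 V, w e * (x e : ℝ)

/-- Total weight of the edges of a subgraph. -/
noncomputable def subgraphCost (G : SimpleGraph V) (w : Sym2 V → ℝ) (H : G.Subgraph) : ℝ :=
  ∑ e ∈ Finset.univ.filter (· ∈ H.edgeSet), w e

/-- Minimum weight of a connected subgraph of `G` containing all vertices of `T`. -/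
noncomputable def steinerCost (G : SimpleGraph V) (w : Sym2 V → ℝ) (T : Set V) : ℝ :=
  sInf {c | ∃ H : G.Subgraph, H.Connected ∧ T ⊆ H.verts ∧ c = subgraphCost G w H}

/-- Optimal value of the f-SAND instance. -/
noncomputable def OPT {ι : Type} (G : SimpleGraph V) (r : V) (C : ι → Finset V)
    (w : Sym2 V → ℝ) : ℝ :=
  sInf {c | ∃ x : Sym2 V → ℕ, Feasible G r C x ∧ instCost w x = c}

end FSand

namespace FSand

/-- The graph `G'` obtained from `G` by adding a new root vertex (`none`) adjacent to
every vertex of `G`. -/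
def rootJoin {V : Type} (G : SimpleGraph V) : SimpleGraph (Option V) where
  Adj a b :=
    (a = none ∧ ∃ v, b = some v) ∨ (b = none ∧ ∃ u, a = some u) ∨
      (∃ u v, a = some u ∧ b = some v ∧ G.Adj u v)
  symm := by
    constructor
    rintro a b (⟨ha, v, hb⟩ | ⟨hb, u, ha⟩ | ⟨u, v, ha, hb, h⟩)
    · exact Or.inr (Or.inl ⟨ha, v, hb⟩)
    · exact Or.inl ⟨hb, u, ha⟩
    · exact Or.inr (Or.inr ⟨v, u, hb, ha, h.symm⟩)
  loopless := by
    constructor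
    rintro a (⟨ha, v, hb⟩ | ⟨hb, u, ha⟩ | ⟨u, v, ha, hb, h⟩)
    · rw [ha] at hb; cases hb
    · rw [hb] at ha; cases ha
    · rw [ha] at hb; exact G.loopless.irrefl u (by cases hb; exact h)

/-- The Odd graph `O_s`: vertices are the `s`-element subsets of `{1, …, 2s+1}`, two of
them adjacent iff they are disjoint. -/
def oddGraph (s : ℕ) : SimpleGraph {A : Finset (Fin (2 * s + 1)) // A.card = s} where
  Adj A B := Disjoint A.1 B.1 ∧ A ≠ B
  symm := by constructor; rintro A B ⟨h, hne⟩; exact ⟨h.symm, hne.symm⟩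
  loopless := by constructor; rintro A ⟨h, hne⟩; exact hne rfl

end FSand

/-!
Write `d v` for the capacity leaving a vertex `v` of `G` and `r v` for the capacity on the root
edge at `v`. Since root edges cost 2, the cost is `∑ x + ∑ r = (∑ d + 3 ∑ r) / 2` by the handshake
identity, and the cut separating all of `G` from the root forces `∑ r ≥ 1`; so it suffices that
`∑ (d v + r v) ≥ 2 n`.

Call `v` pendant if `r v = 0` and `d v = 1`, and charge it to the vertex its unit of capacity
goes to. If `t ≥ 1` pendants are charged to `w`, the star `S` formed by `w` and these pendants
has cut capacity at most `d w - t`, while for a neighbour `v` of `w` the colour `C_{wv}` contains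
all of `S` except possibly `v`. As `w` has two neighbours, this yields `d w ≥ t + 2`; in all
cases `d w + r w + [w pendant] ≥ 2 + t`, and summing over `w` the pendant terms cancel.
-/

namespace FSand

section CutCapacity

variable {W : Type} [Fintype W] [DecidableEq W] (x : Sym2 W → ℕ)

theorem cutCap_eq_sum_sum (S : Finset W) :
    cutCap x S = ∑ a ∈ S, ∑ b ∈ Sᶜ, x s(a, b) := by
  have hcross : univ.filter (Crossing S) = (S ×ˢ Sᶜ).image fun p => s(p.1, p.2) := by
    ext e
    simp only [Crossing, mem_filter, mem_univ, true_and, mem_image, mem_product, mem_compl,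
      Prod.exists]
    grind
  have hinj : Set.InjOn (fun p : W × W => s(p.1, p.2)) ↑(S ×ˢ Sᶜ) := by
    rintro ⟨a, b⟩ hab ⟨c, d⟩ hcd h
    simp only [coe_product, Set.mem_prod, mem_coe, mem_compl] at hab hcd
    rcases Sym2.eq_iff.1 h with ⟨rfl, rfl⟩ | ⟨rfl, rfl⟩
    · rfl
    · exact absurd hab.1 hcd.2
  rw [cutCap, hcross, sum_image hinj, sum_product]

theorem cutCap_compl (S : Finset W) : cutCap x Sᶜ = cutCap x S := by
  rw [cutCap_eq_sum_sum, cutCap_eq_sum_sum, compl_compl, sum_comm]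
  simp_rw [Sym2.eq_swap]

theorem sum_mk_eq_sum_filter_mem (a : W) : ∑ b, x s(a, b) = ∑ e with a ∈ e, x e := by
  have himage : univ.filter (a ∈ ·) = univ.image fun b => s(a, b) := by
    ext e
    simp [Sym2.mem_iff_exists, eq_comm]
  rw [himage, sum_image fun b _ c _ h => Sym2.congr_right.1 h]

variable {x}

theorem cutCap_singleton {a : W} (ha : x s(a, a) = 0) : cutCap x {a} = ∑ b, x s(a, b) := by
  rw [cutCap_eq_sum_sum, sum_singleton, ← sum_compl_add_sum {a}, sum_singleton, ha, add_zero]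

theorem sum_add_sum_le_cutCap_singleton {a : W} (ha : x s(a, a) = 0) {T U : Finset W}
    (hTU : Disjoint T U) : ∑ b ∈ T, x s(a, b) + ∑ b ∈ U, x s(a, b) ≤ cutCap x {a} := by
  rw [cutCap_singleton ha, ← sum_union hTU]
  exact sum_le_sum_of_subset (subset_univ _)

theorem sum_cutCap_singleton (hx : ∀ a, x s(a, a) = 0) : ∑ a, cutCap x {a} = 2 * ∑ e, x e := by
  simp_rw [cutCap_singleton (hx _), sum_mk_eq_sum_filter_mem, sum_filter]
  rw [sum_comm, mul_sum]
  refine sum_congr rfl fun e _ => ?_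
  rw [← sum_filter, sum_const, smul_eq_mul]
  by_cases he : e.IsDiag
  · induction e with
    | _ a b => rw [Sym2.mk_isDiag_iff.1 he, hx, mul_zero, mul_zero]
  · have : univ.filter (· ∈ e) = e.toFinset := by ext; simp
    rw [this, Sym2.card_toFinset_of_not_isDiag e he]

end CutCapacity

section Feasible

variable {W ι : Type} [Fintype W] [DecidableEq W] {G : SimpleGraph W} {r : W}
  {C : ι → Finset W} {x : Sym2 W → ℕ}

theorem Feasible.apply_mk_self (hx : Feasible G r C x) (a : W) : x s(a, a) = 0 :=
  hx.1 _ fun h => G.irrefl (G.mem_edgeSet.1 h)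

theorem Feasible.adj_of_apply_ne_zero (hx : Feasible G r C x) {a b : W} (h : x s(a, b) ≠ 0) :
    G.Adj a b :=
  G.mem_edgeSet.1 <| by_contra fun he => h (hx.1 _ he)

end Feasible

section RootJoin

@[simp]
theorem rootJoin_adj_some {V : Type} {G : SimpleGraph V} {u v : V} :
    (rootJoin G).Adj (some u) (some v) ↔ G.Adj u v := by
  simp [rootJoin]

variable {V : Type} [Fintype V] [DecidableEq V] {G : SimpleGraph V}

/-- The colour `C_{uv} = ({u} ∪ N(u)) ∖ {v}` of an edge `uv`, as vertices of `rootJoin G`. -/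
noncomputable def closedNbhdColors (G : SimpleGraph V) (e : {q : V × V // G.Adj q.1 q.2}) :
    Finset (Option V) :=
  ((insert e.1.1 (G.neighborFinset e.1.1)).erase e.1.2).image some

variable (x : Sym2 (Option V) → ℕ)

def IsPendant (v : V) : Prop := x s(none, some v) = 0 ∧ cutCap x {some v} = 1

noncomputable def pendantsAt (w : V) : Finset V := {u | IsPendant x u ∧ x s(some u, some w) = 1}

noncomputable def pendantStar (w : V) : Finset (Option V) :=
  insert (some w) ((pendantsAt x w).image some)

variable {x} (hx : Feasible (rootJoin G) none (closedNbhdColors G) x)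
include hx

theorem cutCap_some_eq (v : V) :
    cutCap x {some v} = x s(none, some v) + ∑ u, x s(some v, some u) := by
  rw [cutCap_singleton (hx.apply_mk_self _), Fintype.sum_option, Sym2.eq_swap]

theorem sum_cutCap_some_add_sum_eq_two_mul_sum :
    ∑ v, cutCap x {some v} + ∑ v, x s(none, some v) = 2 * ∑ e, x e := by
  rw [← sum_cutCap_singleton hx.apply_mk_self, Fintype.sum_option,
    cutCap_singleton (hx.apply_mk_self _), Fintype.sum_option, hx.apply_mk_self, zero_add,
    add_comm]

theorem one_le_cutCap_some {v w : V} (h : G.Adj v w) : 1 ≤ cutCap x {some v} := by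
  have hv : some v ∈ closedNbhdColors G ⟨(v, w), h⟩ ∩ {some v} := by
    simp [closedNbhdColors, h.ne]
  exact (card_pos.2 ⟨_, hv⟩).trans_le (hx.2 _ (by simp) _)

theorem one_le_sum_apply_mk_none {v w : V} (h : G.Adj v w) : 1 ≤ ∑ u, x s(none, some u) := by
  have hv : some v ∈ closedNbhdColors G ⟨(v, w), h⟩ ∩ {none}ᶜ := by
    simp [closedNbhdColors, h.ne]
  have hcut := hx.2 _ (by simp) _ |>.trans_lt' (card_pos.2 ⟨_, hv⟩)
  rwa [cutCap_compl, cutCap_singleton (hx.apply_mk_self _), Fintype.sum_option,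
    hx.apply_mk_self, zero_add] at hcut

theorem adj_of_mem_pendantsAt {u w : V} (hu : u ∈ pendantsAt x w) : G.Adj w u := by
  have h : x s(some u, some w) ≠ 0 := by simp_all [pendantsAt]
  exact (rootJoin_adj_some.1 (hx.adj_of_apply_ne_zero h)).symm

theorem card_pendantStar (w : V) : #(pendantStar x w) = #(pendantsAt x w) + 1 := by
  rw [pendantStar, card_insert_of_notMem, card_image_of_injective _ (Option.some_injective _)]
  simpa using fun hw => (adj_of_mem_pendantsAt hx hw).ne rfl

theorem cutCap_pendantStar_add_card_le (w : V) :
    cutCap x (pendantStar x w) + #(pendantsAt x w) ≤ cutCap x {some w} := by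
  obtain ⟨S, hS⟩ : ∃ S, S = pendantStar x w := ⟨_, rfl⟩
  have hwS : some w ∈ S := hS ▸ mem_insert_self _ _
  have hPS : (pendantsAt x w).image some ⊆ S := hS ▸ subset_insert _ _
  have hpendant_out : ∀ u ∈ pendantsAt x w, ∑ b ∈ Sᶜ, x s(some u, b) = 0 := by
    intro u hu
    have hle := sum_add_sum_le_cutCap_singleton (hx.apply_mk_self (some u))
      (disjoint_compl_left.mono_right (singleton_subset_iff.2 hwS))
    simp only [pendantsAt, mem_filter, mem_univ, true_and] at hu
    rw [sum_singleton, hu.1.2, hu.2] at hle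
    omega
  have hw_to_pendants :
      ∑ b ∈ (pendantsAt x w).image some, x s(some w, b) = #(pendantsAt x w) := by
    rw [sum_image fun _ _ _ _ h => Option.some_injective _ h, card_eq_sum_ones]
    refine sum_congr rfl fun u hu => ?_
    simp only [pendantsAt, mem_filter, mem_univ, true_and] at hu
    rw [Sym2.eq_swap, hu.2]
  have hw_out := sum_add_sum_le_cutCap_singleton (hx.apply_mk_self (some w))
    (disjoint_compl_left.mono_right hPS)
  rw [hw_to_pendants] at hw_out
  have hsplit : cutCap x S = ∑ b ∈ Sᶜ, x s(some w, b) := by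
    rw [cutCap_eq_sum_sum]
    nth_rw 1 [hS]
    rw [pendantStar, sum_insert, sum_image fun _ _ _ _ h => Option.some_injective _ h,
      sum_eq_zero hpendant_out, add_zero]
    simpa using fun hw => (adj_of_mem_pendantsAt hx hw).ne rfl
  rwa [← hS, hsplit]

theorem card_erase_pendantStar_le_cutCap {w v : V} (hvw : G.Adj w v) :
    #((pendantStar x w).erase (some v)) ≤ cutCap x (pendantStar x w) := by
  have hsub : (pendantStar x w).erase (some v) ⊆ closedNbhdColors G ⟨(w, v), hvw⟩ := by
    intro a ha
    simp only [pendantStar, mem_erase, mem_insert, mem_image] at ha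
    obtain ⟨hav, rfl | ⟨u, hu, rfl⟩⟩ := ha
    · simp [closedNbhdColors, hvw.ne]
    · have := adj_of_mem_pendantsAt hx hu
      simp_all [closedNbhdColors]
  exact (card_le_card (subset_inter hsub (erase_subset _ _))).trans
    (hx.2 _ (by simp [pendantStar]) _)

theorem card_pendantsAt_add_two_le {w : V} (hdeg : 2 ≤ G.degree w)
    (hne : (pendantsAt x w).Nonempty) : #(pendantsAt x w) + 2 ≤ cutCap x {some w} := by
  obtain ⟨v₁, hv₁, v₂, hv₂, hv⟩ :=
    one_lt_card.1 (hdeg.trans_eq (G.card_neighborFinset_eq_degree w).symm)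
  rw [SimpleGraph.mem_neighborFinset] at hv₁ hv₂
  have hstar := cutCap_pendantStar_add_card_le hx w
  by_cases hall : v₁ ∈ pendantsAt x w ∧ v₂ ∈ pendantsAt x w
  · have htwo : 2 ≤ #(pendantsAt x w) := one_lt_card.2 ⟨v₁, hall.1, v₂, hall.2, hv⟩
    have hlow := card_erase_pendantStar_le_cutCap hx hv₁
    rw [card_erase_of_mem (by simp [pendantStar, hall.1]), card_pendantStar hx] at hlow
    omega
  · obtain ⟨v, hvw, hv⟩ : ∃ v, G.Adj w v ∧ v ∉ pendantsAt x w := by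
      by_cases h₁ : v₁ ∈ pendantsAt x w
      · exact ⟨v₂, hv₂, fun h₂ => hall ⟨h₁, h₂⟩⟩
      · exact ⟨v₁, hv₁, h₁⟩
    have hlow := card_erase_pendantStar_le_cutCap hx hvw
    rw [erase_eq_of_notMem (by simp [pendantStar, hv, hvw.ne']), card_pendantStar hx] at hlow
    have := hne.card_pos
    omega

theorem two_add_card_pendantsAt_le {w : V} (hdeg : 2 ≤ G.degree w) :
    2 + #(pendantsAt x w) ≤
      cutCap x {some w} + x s(none, some w) + if IsPendant x w then 1 else 0 := by
  obtain ⟨v, hv⟩ := G.degree_pos_iff_exists_adj w |>.1 (by omega)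
  have hcap := one_le_cutCap_some hx hv
  rcases (pendantsAt x w).eq_empty_or_nonempty with hempty | hne
  · rw [hempty, card_empty]
    by_cases hw : IsPendant x w
    · simp [hw.2, hw]
    · simp only [IsPendant, not_and] at hw
      split_ifs <;> omega
  · have := card_pendantsAt_add_two_le hx hdeg hne
    split_ifs <;> omega

theorem sum_card_pendantsAt : ∑ w, #(pendantsAt x w) = #{u | IsPendant x u} := by
  have hunit : ∀ u, IsPendant x u → ∑ w, x s(some u, some w) = 1 := fun u hu => by
    have := cutCap_some_eq hx u
    rw [hu.1, hu.2] at this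
    omega
  have hindicator : ∀ u, IsPendant x u → ∀ w,
      (if x s(some u, some w) = 1 then 1 else 0) = x s(some u, some w) := fun u hu w => by
    have : x s(some u, some w) ≤ 1 :=
      (single_le_sum (f := fun w => x s(some u, some w)) (fun _ _ => Nat.zero_le _)
        (mem_univ w)).trans_eq (hunit u hu)
    split_ifs <;> omega
  calc ∑ w, #(pendantsAt x w)
      = ∑ w, ∑ u with IsPendant x u, x s(some u, some w) := by
        refine sum_congr rfl fun w _ => ?_
        rw [pendantsAt, card_filter, ← sum_filter_add_sum_filter_not univ (IsPendant x)]
        rw [sum_eq_zero (s := univ.filter (¬IsPendant x ·)) (by simp_all), add_zero]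
        exact sum_congr rfl fun u hu => by simp_all
    _ = ∑ u with IsPendant x u, 1 := by
        rw [sum_comm]
        exact sum_congr rfl fun u hu => hunit u (mem_filter.1 hu).2
    _ = #{u | IsPendant x u} := (card_eq_sum_ones _).symm

theorem instCost_rootJoin_eq :
    instCost (fun e => if none ∈ e then 2 else 1) x =
      ((∑ e, x e + ∑ v, x s(none, some v) : ℕ) : ℝ) := by
  have hroot : ∑ e with none ∈ e, x e = ∑ v, x s(none, some v) := by
    rw [← sum_mk_eq_sum_filter_mem, Fintype.sum_option, hx.apply_mk_self, zero_add]
  have hweight : ∀ e : Sym2 (Option V), (if none ∈ e then (2 : ℝ) else 1) * x e =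
      x e + if none ∈ e then (x e : ℝ) else 0 := fun e => by split_ifs <;> ring
  rw [instCost, Nat.cast_add, Nat.cast_sum, ← hroot, Nat.cast_sum, sum_filter]
  simp_rw [hweight]
  rw [sum_add_distrib]

theorem card_add_one_le_instCost [Nonempty V] (hdeg : ∀ v, 2 ≤ G.degree v) :
    (Fintype.card V : ℝ) + 1 ≤ instCost (fun e => if none ∈ e then 2 else 1) x := by
  have hlocal := sum_le_sum fun w (_ : w ∈ univ) => two_add_card_pendantsAt_le hx (hdeg w)
  rw [sum_add_distrib, sum_add_distrib, sum_add_distrib, sum_card_pendantsAt hx, sum_boole,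
    sum_const, card_univ, smul_eq_mul] at hlocal
  have hhandshake := sum_cutCap_some_add_sum_eq_two_mul_sum hx
  obtain ⟨v⟩ := ‹Nonempty V›
  obtain ⟨u, hu⟩ := G.degree_pos_iff_exists_adj v |>.1 (by have := hdeg v; omega)
  have hroot := one_le_sum_apply_mk_none hx hu
  have hnat : Fintype.card V + 1 ≤ ∑ e, x e + ∑ v, x s(none, some v) := by
    simp only [Nat.cast_id] at hlocal
    omega
  rw [instCost_rootJoin_eq hx]
  exact_mod_cast hnat

end RootJoin

theorem oddGraph_degree {s : ℕ} (hs : 1 ≤ s)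
    (A : {A : Finset (Fin (2 * s + 1)) // A.card = s}) :
    (oddGraph s).degree A = s + 1 := by
  have hnbrs : ((oddGraph s).neighborFinset A).map (Function.Embedding.subtype _) =
      powersetCard s A.1ᶜ := by
    ext T
    simp only [mem_map, SimpleGraph.mem_neighborFinset, Function.Embedding.subtype_apply,
      mem_powersetCard, subset_compl_iff_disjoint_left]
    constructor
    · rintro ⟨B, ⟨hAB, -⟩, rfl⟩
      exact ⟨hAB, B.2⟩
    · rintro ⟨hAT, hT⟩
      refine ⟨⟨T, hT⟩, ⟨hAT, fun hAB => ?_⟩, rfl⟩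
      obtain ⟨a, ha⟩ := card_pos.1 (A.2.symm ▸ hs : 0 < #A.1)
      exact disjoint_left.1 hAT ha (by rwa [hAB] at ha)
  rw [← SimpleGraph.card_neighborFinset_eq_degree, ← card_map, hnbrs, card_powersetCard,
    card_compl, A.2, Fintype.card_fin, show 2 * s + 1 - s = s + 1 by omega,
    Nat.choose_succ_self_right]

end FSand

open FSand in
/-- in the f-SAND instance on the Odd graph `O_s` augmented by a root
(root edges of cost 2, graph edges of cost 1), with a color
`C_{uv} = ({u} ∪ N(u)) ∖ {v}` for every edge `(u,v)` of `O_s`, every feasible capacity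
installation costs at least `n + 1`, where `n = C(2s+1, s)` is the number of vertices
of `O_s`. -/
theorem stmt_12 (s : ℕ) (hs : 1 ≤ s)
    (x : Sym2 (Option {A : Finset (Fin (2 * s + 1)) // A.card = s}) → ℕ)
    (hfeas : Feasible (rootJoin (oddGraph s))
      (none : Option {A : Finset (Fin (2 * s + 1)) // A.card = s})
      (fun e : {q : {A : Finset (Fin (2 * s + 1)) // A.card = s} ×
                    {A : Finset (Fin (2 * s + 1)) // A.card = s} //
                  (oddGraph s).Adj q.1 q.2} =>
        ((insert e.1.1 ((oddGraph s).neighborFinset e.1.1)).erase e.1.2).image some)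
      x) :
    ((2 * s + 1).choose s : ℝ) + 1 ≤
      instCost (fun e => if (none : Option _) ∈ e then 2 else 1) x := by
  have hcard : Fintype.card {A : Finset (Fin (2 * s + 1)) // A.card = s} = (2 * s + 1).choose s :=
    by rw [Fintype.card_finset_len, Fintype.card_fin]
  have : Nonempty {A : Finset (Fin (2 * s + 1)) // A.card = s} :=
    Fintype.card_pos_iff.1 (hcard ▸ Nat.choose_pos (by omega))
  have hbound := card_add_one_le_instCost hfeas fun A => (oddGraph_degree hs A).symm ▸ by omega
  rwa [hcard] at hbound
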